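/- Let 1 ≤ d ≤ r and 0 ≤ k ≤ r−1 be integers with d odd. Then last(ĝ^{r,d}_k) > 0 whenever 2k ≥ d, and last(ĝ^{r,d}_k) < 0 whenever 2k < d. -/

import Mathlib

/-- `vC r d i` is the number of tuples `(u₁,…,u_d) ∈ ℤ^d` with `0 ≤ uₗ ≤ r` for all `l`
and `u₁ + ⋯ + u_d = i`.  For `d = 0` this is `1` if `i = 0` and `0` otherwise. -/
def vC (r d : ℕ) (i : ℤ) : ℕ :=
  (Finset.univ.filter fun u : Fin d → Fin (r + 1) => (∑ l, ((u l : ℕ) : ℤ)) = i).card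

/-- `gHat r d k i` is the `(i+1)`-st entry (`0 ≤ i ≤ ⌊d/2⌋+1`) of the vector
`ĝ^{r,d}_k ∈ ℤ^{⌊d/2⌋+2}`, defined by `g₀ = C(r−1,d,−k)` and
`g_i = C(r−1,d,ir−k) − C(r−1,d,(i−1)r−k)` for `i ≥ 1`; for `k ≥ r` the vector
`ĝ^{r,d}_k` is the zero vector.  The vector `g^{r,d}_k ∈ ℤ^{⌊d/2⌋+1}` is obtained
from `ĝ^{r,d}_k` by deleting its last entry, so its entries are `gHat r d k i`
for `0 ≤ i ≤ ⌊d/2⌋`; `last (g^{r,d}_k) = gHat r d k (d/2)` and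
`last (ĝ^{r,d}_k) = gHat r d k (d/2 + 1)`. -/
def gHat (r d k : ℕ) (i : ℕ) : ℤ :=
  if r ≤ k then 0
  else if i = 0 then (vC (r - 1) d (-(k : ℤ)) : ℤ)
  else (vC (r - 1) d ((i : ℤ) * (r : ℤ) - (k : ℤ)) : ℤ)
       - (vC (r - 1) d (((i : ℤ) - 1) * (r : ℤ) - (k : ℤ)) : ℤ)

/-!
Write `d = 2m + 1` and `s = r - 1`. The last entry of `ĝ^{r,d}_k` is
`C(s,d,(m+1)r-k) - C(s,d,mr-k)`. The sequence `i ↦ C(s,d,i)`, the coefficients of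
`(1 + x + ⋯ + xˢ)ᵈ`, is symmetric about `ds/2` and, for `d ≥ 2`, strictly increasing on
`[0, ds/2]`: the convolution recursion gives
`C(s,d+1,i+1) - C(s,d+1,i) = C(s,d,i+1) - C(s,d,i-s)`, and `i + 1` is closer to the centre
than `i - s`. Hence it is larger at arguments closer to `ds/2`, and it vanishes outside
`[0, ds]`. The two arguments lie at distances `|r + d - 2k| / 2` and `(r + 2k - d) / 2`
from the centre, and the first is the smaller exactly when `d < 2k`.
-/

open Finset

theorem lt_of_abs_two_mul_sub_lt_of_symm {α : Type*} [Preorder α] {f : ℤ → α} {N : ℤ}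
    (hsymm : ∀ i, f (N - i) = f i) (hstep : ∀ i, 0 ≤ i → 2 * (i + 1) ≤ N → f i < f (i + 1))
    {x y : ℤ} (hx : |2 * x - N| ≤ N) (hxy : |2 * y - N| < |2 * x - N|) : f x < f y := by
  have mono : StrictMonoOn f (Set.Icc 0 (N / 2)) :=
    strictMonoOn_of_lt_add_one Set.ordConnected_Icc fun i _ hi hi' ↦
      hstep i hi.1 (by have := hi'.2; omega)
  have fold : ∀ i, f (min i (N - i)) = f i := fun i ↦ by
    rcases min_choice i (N - i) with h | h <;> rw [h]; exact hsymm i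
  have two_mul_min : ∀ i, 2 * min i (N - i) = N - |2 * i - N| := fun i ↦ by
    rcases le_total (2 * i) N with h | h
    · rw [abs_of_nonpos (by omega)]; omega
    · rw [abs_of_nonneg (by omega)]; omega
  rw [← fold x, ← fold y]
  refine mono ⟨?_, ?_⟩ ⟨?_, ?_⟩ ?_ <;> have := two_mul_min x <;> have := two_mul_min y <;>
    have := abs_nonneg (2 * y - N) <;> omega

section vC

variable {s d : ℕ}

theorem vC_eq_zero_of_neg {i : ℤ} (hi : i < 0) : vC s d i = 0 := by
  rw [vC, card_eq_zero, filter_eq_empty_iff]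
  intro u _ hu
  have : 0 ≤ ∑ l, ((u l : ℕ) : ℤ) := sum_nonneg fun _ _ ↦ by positivity
  omega

theorem vC_symm (s d : ℕ) (i : ℤ) : vC s d (d * s - i) = vC s d i := by
  have sum_rev (u : Fin d → Fin (s + 1)) :
      ∑ l, (((u l).rev : ℕ) : ℤ) = d * s - ∑ l, ((u l : ℕ) : ℤ) := by
    simp [Fin.val_rev, sum_sub_distrib, Nat.cast_sub (Nat.le_of_lt_succ (u _).isLt)]
  refine card_equiv (Equiv.piCongrRight fun _ ↦ Fin.revPerm) fun u ↦ ?_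
  simp only [mem_filter, mem_univ, true_and, Equiv.piCongrRight_apply, Pi.map_apply,
    Fin.revPerm_apply, sum_rev]
  omega

theorem vC_eq_zero_of_lt {i : ℤ} (hi : d * s < i) : vC s d i = 0 := by
  rw [← vC_symm, vC_eq_zero_of_neg (by omega)]

theorem vC_succ (s d : ℕ) (i : ℤ) :
    vC s (d + 1) i = ∑ t : Fin (s + 1), vC s d (i - t) := by
  rw [vC, card_eq_sum_card_fiberwise (f := fun u ↦ u 0) (t := univ) fun _ _ ↦ mem_univ _]
  refine sum_congr rfl fun t _ ↦ card_nbij' (fun u l ↦ u l.succ)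
    (fun v : Fin d → Fin (s + 1) ↦ Fin.cons t v) ?_ ?_ ?_ ?_
  · intro u hu
    simp only [coe_filter, mem_filter, mem_univ, true_and, Set.mem_ofPred_eq,
      Fin.sum_univ_succ] at hu ⊢
    omega
  · intro v hv
    simp only [coe_filter, mem_filter, mem_univ, true_and, Set.mem_ofPred_eq,
      Fin.sum_univ_succ, Fin.cons_zero, Fin.cons_succ, and_true] at hv ⊢
    omega
  · intro u hu
    simp only [coe_filter, mem_filter, mem_univ, true_and, Set.mem_ofPred_eq] at hu
    rw [← hu.2]
    exact Fin.cons_self_tail u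
  · intro v _
    rfl

theorem vC_pos {i : ℤ} (hi₀ : 0 ≤ i) (hi : i ≤ d * s) : 0 < vC s d i := by
  induction d generalizing i with
  | zero =>
    obtain rfl : i = 0 := by simp only [Nat.cast_zero, zero_mul] at hi; omega
    simp [vC]
  | succ d ih =>
    set t : ℕ := min s i.toNat
    have : 0 ≤ (d : ℤ) * s := by positivity
    have ht : (t : ℤ) ≤ i ∧ i - t ≤ d * s := by push_cast [add_mul] at hi; omega
    rw [vC_succ]
    exact lt_of_lt_of_le (ih (by omega) ht.2)
      (single_le_sum (f := fun t : Fin (s + 1) ↦ vC s d (i - t)) (fun _ _ ↦ Nat.zero_le _)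
        (mem_univ ⟨t, by omega⟩))

theorem vC_succ_add_one_add (s d : ℕ) (i : ℤ) :
    vC s (d + 1) (i + 1) + vC s d (i - s) = vC s (d + 1) i + vC s d (i + 1) := by
  rw [vC_succ, vC_succ, Fin.sum_univ_succ, Fin.sum_univ_castSucc]
  simp only [Fin.val_zero, Fin.val_succ, Fin.val_castSucc, Fin.val_last]
  push_cast
  simp only [add_sub_add_right_eq_sub, sub_zero]
  ring

theorem vC_lt_vC_add_one (hd : 2 ≤ d) {i : ℤ} (hi₀ : 0 ≤ i) (hi : 2 * (i + 1) ≤ d * s) :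
    vC s d i < vC s d (i + 1) := by
  induction d using Nat.strong_induction_on generalizing i with
  | _ d ih =>
  obtain ⟨e, rfl⟩ : ∃ e, d = e + 1 := ⟨d - 1, by omega⟩
  have hes : (s : ℤ) ≤ e * s := le_mul_of_one_le_left (by positivity) (by norm_cast; omega)
  push_cast [add_mul, one_mul] at hi
  suffices vC s e (i - s) < vC s e (i + 1) by have := vC_succ_add_one_add s e i; omega
  rcases lt_or_ge i s with his | his
  · rw [vC_eq_zero_of_neg (by omega)]
    exact vC_pos (by omega) (by omega)
  · obtain rfl | he : e = 1 ∨ 2 ≤ e := by omega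
    · simp only [Nat.cast_one, one_mul] at hi; omega
    refine lt_of_abs_two_mul_sub_lt_of_symm (vC_symm s e)
      (fun j hj₀ hj ↦ ih e (by omega) he hj₀ hj) ?_ ?_
    · rw [abs_le]; constructor <;> omega
    · rw [abs_lt, abs_of_neg (by omega)]; constructor <;> omega

theorem vC_lt_vC_of_abs_lt {x y : ℤ} (hy : |2 * y - d * s| ≤ d * s)
    (hxy : |2 * y - d * s| < |2 * x - d * s|) (hx : 2 ≤ d ∨ x < 0 ∨ d * s < x) :
    vC s d x < vC s d y := by
  by_cases hx_mem : |2 * x - d * s| ≤ d * s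
  · have hd : 2 ≤ d := hx.resolve_right (by rw [abs_le] at hx_mem; omega)
    exact lt_of_abs_two_mul_sub_lt_of_symm (vC_symm s d) (fun _ ↦ vC_lt_vC_add_one hd) hx_mem hxy
  · rw [abs_le] at hx_mem hy
    obtain hx | hx : x < 0 ∨ d * s < x := by omega
    · rw [vC_eq_zero_of_neg hx]; exact vC_pos (by omega) (by omega)
    · rw [vC_eq_zero_of_lt hx]; exact vC_pos (by omega) (by omega)

end vC

theorem gHat_succ_of_lt {r k : ℕ} (hk : k < r) (d i : ℕ) :
    gHat r d k (i + 1) = vC (r - 1) d ((i + 1) * r - k) - vC (r - 1) d (i * r - k) := by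
  simp [gHat, hk.not_ge]

theorem stmt_13_general (r d k : ℕ) (hdr : d ≤ r) (hodd : Odd d) (hk : k ≤ r - 1) :
    (d ≤ 2 * k → 0 < gHat r d k (d / 2 + 1)) ∧
    (2 * k < d → gHat r d k (d / 2 + 1) < 0) := by
  obtain ⟨m, rfl⟩ := hodd
  rw [show (2 * m + 1) / 2 + 1 = m + 1 by omega, gHat_succ_of_lt (by omega), sub_pos, sub_neg,
    Nat.cast_lt, Nat.cast_lt]
  have hN : (((2 * m + 1 : ℕ) : ℤ) * ((r - 1 : ℕ) : ℤ)) = (2 * m + 1) * (r - 1) := by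
    push_cast [Nat.cast_sub (by omega : 1 ≤ r)]; ring
  have hNr : (r : ℤ) - 1 ≤ (2 * m + 1) * (r - 1) := by nlinarith
  -- twice the signed distances of `(m + 1) r - k` and `m r - k` from the centre of `vC (r - 1) d`
  have ha : 2 * (((m : ℤ) + 1) * r - k) - (2 * m + 1) * (r - 1) = r + (2 * m + 1) - 2 * k := by
    ring
  have hb : 2 * ((m : ℤ) * r - k) - (2 * m + 1) * (r - 1) = (2 * m + 1) - r - 2 * k := by ring
  have ha_le := le_abs_self ((r : ℤ) + (2 * m + 1) - 2 * k)
  have ha_neg_le := neg_le_abs ((r : ℤ) + (2 * m + 1) - 2 * k)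
  have hb_le := le_abs_self ((2 * m + 1 : ℤ) - r - 2 * k)
  have hb_neg_le := neg_le_abs ((2 * m + 1 : ℤ) - r - 2 * k)
  constructor <;> intro h <;> apply vC_lt_vC_of_abs_lt <;> rw [hN]
  · rw [ha, abs_le]; omega
  · rw [ha, hb, abs_lt]; omega
  · obtain rfl | hm := m.eq_zero_or_pos
    · right; left; simp only [Nat.cast_zero, zero_mul]; omega
    · omega
  · rw [hb, abs_le]; omega
  · rw [ha, hb, abs_lt]; omega
  · obtain rfl | hm := m.eq_zero_or_pos
    · right; right; simp only [Nat.cast_zero, mul_zero, zero_add, one_mul]; omega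
    · omega

/-- Let `1 ≤ d ≤ r` and `0 ≤ k ≤ r−1` with `d` odd.  Then `last(ĝ^{r,d}_k) > 0`
whenever `2k ≥ d`, and `last(ĝ^{r,d}_k) < 0` whenever `2k < d`. -/
theorem stmt_13 (r d k : ℕ) (hd : 1 ≤ d) (hdr : d ≤ r) (hodd : Odd d) (hk : k ≤ r - 1) :
    (d ≤ 2 * k → 0 < gHat r d k (d / 2 + 1)) ∧
    (2 * k < d → gHat r d k (d / 2 + 1) < 0) :=
  stmt_13_general r d k hdr hodd hk
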